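/- Let $0<r<1/2$, $P$ the uniform Cantor distribution with ratio $r$, $V=\frac{1-r}{4(1+r)}$. For each $k\ge1$, the set $\beta=\{S_\sigma(1/2):\sigma\in\{1,2\}^k\}$ of the $2^k$ cylinder midpoints satisfies $\int\min_{a\in\beta}(x-a)^2\,dP(x)=r^{2k}V$. -/

import Mathlib

open MeasureTheory
open scoped ENNReal

noncomputable def Smap (r : ℝ) (i : Fin 2) : ℝ → ℝ :=
  fun x => if i = 0 then r * x else r * x + (1 - r)

noncomputable def Sword (r : ℝ) (σ : List (Fin 2)) : ℝ → ℝ :=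
  σ.foldr (fun i g => Smap r i ∘ g) id

/-!
Write `F_k = minSqDist (midpoints r k)`. The two first-level branches `Smap r 0 '' [0, 1]` and
`Smap r 1 '' [0, 1]` are separated by a gap `1 - 2r`, while the level-`k` midpoints stay `r ^ k / 2`
away from the ends of `[0, 1]`. So if `y ∈ [0, 1]` has `F_k y ≤ (r ^ k / 2) ^ 2`, the midpoint of
level `k + 1` nearest to `Smap r i y` lies in branch `i`, and `F_{k+1} (Smap r i y) = r ^ 2 * F_k y`.
The measure `P` lives on `[0, 1]`, since the maps contract `|x - 1/2| - 1/2` by the factor `r`;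
as they also preserve the invariant above, it holds `P`-a.e. at every level.
Self-similarity of `P` then gives `∫ F_{k+1} dP = r ^ 2 ∫ F_k dP`, and `V = ∫ (x - 1/2) ^ 2 dP`
is the fixed point of `I = r ^ 2 I + (1 - r) ^ 2 / 4`.
-/

open Set
open scoped Pointwise

noncomputable def minSqDist (B : Set ℝ) (x : ℝ) : ℝ :=
  sInf ((fun a => (x - a) ^ 2) '' B)

section minSqDist

variable {B C : Set ℝ} {x a c : ℝ}

lemma bddBelow_sqDist_image (B : Set ℝ) (x : ℝ) : BddBelow ((fun a => (x - a) ^ 2) '' B) :=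
  ⟨0, by rintro _ ⟨a, -, rfl⟩; positivity⟩

lemma minSqDist_le (ha : a ∈ B) : minSqDist B x ≤ (x - a) ^ 2 :=
  csInf_le (bddBelow_sqDist_image B x) (mem_image_of_mem _ ha)

lemma le_minSqDist (hB : B.Nonempty) (h : ∀ a ∈ B, c ≤ (x - a) ^ 2) : c ≤ minSqDist B x :=
  le_csInf (hB.image _) (by rintro _ ⟨a, ha, rfl⟩; exact h a ha)

lemma minSqDist_nonneg (hB : B.Nonempty) : 0 ≤ minSqDist B x :=
  le_minSqDist hB fun _ _ => sq_nonneg _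

@[simp] lemma minSqDist_singleton (a x : ℝ) : minSqDist {a} x = (x - a) ^ 2 := by
  simp [minSqDist]

lemma minSqDist_image_of_affine {g : ℝ → ℝ} (hg : ∀ a b, g a - g b = c * (a - b))
    (B : Set ℝ) (x : ℝ) : minSqDist (g '' B) (g x) = c ^ 2 * minSqDist B x := by
  have : (fun a => (g x - a) ^ 2) '' (g '' B) = c ^ 2 • (fun a => (x - a) ^ 2) '' B := by
    rw [image_image, ← image_smul, image_image]
    refine image_congr fun a _ => ?_
    rw [hg, smul_eq_mul]; ring
  rw [minSqDist, this, Real.sInf_smul_of_nonneg (sq_nonneg c), smul_eq_mul, minSqDist]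

lemma minSqDist_eq_of_subset (hBC : B ⊆ C) (hB : B.Nonempty)
    (h : ∀ a ∈ C, minSqDist B x ≤ (x - a) ^ 2) : minSqDist C x = minSqDist B x :=
  le_antisymm (csInf_le_csInf (bddBelow_sqDist_image C x) (hB.image _) (image_mono hBC))
    (le_minSqDist (hB.mono hBC) h)

lemma Set.Countable.measurable_minSqDist (hB : B.Countable) : Measurable (minSqDist B) := by
  have := hB.to_subtype
  have hinf : minSqDist B = fun x => ⨅ a : B, (x - (a : ℝ)) ^ 2 := by
    funext x; rw [minSqDist, image_eq_range]; rfl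
  rw [hinf]
  exact .iInf fun a => by fun_prop

end minSqDist

def IsSelfSimilar {α : Type*} [MeasurableSpace α] (f : Fin 2 → α → α) (P : Measure α) : Prop :=
  P = (2 : ℝ≥0∞)⁻¹ • P.map (f 0) + (2 : ℝ≥0∞)⁻¹ • P.map (f 1)

namespace IsSelfSimilar

variable {α : Type*} [MeasurableSpace α] {f : Fin 2 → α → α} {P : Measure α}

lemma measure_eq (hP : IsSelfSimilar f P) (hf : ∀ i, Measurable (f i)) {t : Set α}
    (ht : MeasurableSet t) : P t = (2 : ℝ≥0∞)⁻¹ * P (f 0 ⁻¹' t) + (2 : ℝ≥0∞)⁻¹ * P (f 1 ⁻¹' t) := by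
  conv_lhs => rw [hP]
  simp [Measure.map_apply (hf _) ht]

lemma measure_le (hP : IsSelfSimilar f P) (hf : ∀ i, Measurable (f i)) {s t : Set α}
    (ht : MeasurableSet t) (hts : ∀ i, f i ⁻¹' t ⊆ s) : P t ≤ P s :=
  calc P t ≤ (2 : ℝ≥0∞)⁻¹ * P s + (2 : ℝ≥0∞)⁻¹ * P s := by
        rw [hP.measure_eq hf ht]; gcongr <;> exact hts _
    _ = P s := by rw [← add_mul, ENNReal.inv_two_add_inv_two, one_mul]

lemma ae_mem_of_mapsTo (hP : IsSelfSimilar f P) (hf : ∀ i, Measurable (f i)) {s t : Set α}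
    (hs : ∀ᵐ x ∂P, x ∈ s) (ht : MeasurableSet t) (hst : ∀ i, MapsTo (f i) s t) :
    ∀ᵐ x ∂P, x ∈ t := by
  rw [ae_iff] at hs ⊢
  exact nonpos_iff_eq_zero.1
    ((hP.measure_le hf ht.compl fun i x hx hxs => hx (hst i hxs)).trans_eq hs)

lemma map_le_two_smul (hP : IsSelfSimilar f P) (i : Fin 2) : P.map (f i) ≤ (2 : ℝ≥0∞) • P := by
  have h : (2 : ℝ≥0∞)⁻¹ • P.map (f i) ≤ P := by
    conv_rhs => rw [hP]
    fin_cases i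
    · exact Measure.le_add_right le_rfl
    · exact Measure.le_add_left le_rfl
  calc P.map (f i) = (2 : ℝ≥0∞) • (2 : ℝ≥0∞)⁻¹ • P.map (f i) := by
        rw [smul_smul, ENNReal.mul_inv_cancel two_ne_zero ENNReal.ofNat_ne_top, one_smul]
    _ ≤ (2 : ℝ≥0∞) • P := by gcongr

lemma integrable_comp {E : Type*} [NormedAddCommGroup E] {φ : α → E} (hP : IsSelfSimilar f P)
    (hf : ∀ i, Measurable (f i)) (hφ : Integrable φ P) (i : Fin 2) :
    Integrable (fun x => φ (f i x)) P := by
  have h : Integrable φ (P.map (f i)) :=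
    hφ.of_measure_le_smul ENNReal.ofNat_ne_top (hP.map_le_two_smul i)
  exact (integrable_map_measure h.aestronglyMeasurable (hf i).aemeasurable).1 h

lemma integral_eq {E : Type*} [NormedAddCommGroup E] [NormedSpace ℝ E] {φ : α → E}
    (hP : IsSelfSimilar f P) (hf : ∀ i, Measurable (f i)) (hφ : Integrable φ P) :
    ∫ x, φ x ∂P = (2 : ℝ)⁻¹ • ∫ x, φ (f 0 x) ∂P + (2 : ℝ)⁻¹ • ∫ x, φ (f 1 x) ∂P := by
  have hmap (i : Fin 2) : Integrable φ (P.map (f i)) :=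
    hφ.of_measure_le_smul ENNReal.ofNat_ne_top (hP.map_le_two_smul i)
  conv_lhs => rw [hP]
  rw [integral_add_measure ((hmap 0).smul_measure (by simp)) ((hmap 1).smul_measure (by simp)),
    integral_smul_measure, integral_smul_measure,
    integral_map (hf 0).aemeasurable (hmap 0).aestronglyMeasurable,
    integral_map (hf 1).aemeasurable (hmap 1).aestronglyMeasurable]
  simp

section Contracting

variable [IsFiniteMeasure P] {g : α → ℝ} {c : ℝ}

lemma measure_lt_eq_zero_of_contracting (hP : IsSelfSimilar f P) (hf : ∀ i, Measurable (f i))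
    (hg : Measurable g) (hc₀ : 0 < c) (hc₁ : c < 1) (hgf : ∀ i x, g (f i x) ≤ c * g x)
    {t : ℝ} (ht : 0 < t) : P {x | t < g x} = 0 := by
  have hstep (t : ℝ) : P {x | t < g x} ≤ P {x | t / c < g x} :=
    hP.measure_le hf (measurableSet_lt measurable_const hg) fun i x (hx : t < g (f i x)) => by
      change t / c < g x
      rw [div_lt_iff₀ hc₀]
      linarith [hgf i x]
  have hiter (t : ℝ) (n : ℕ) : P {x | t < g x} ≤ P {x | t / c ^ n < g x} := by
    induction n with
    | zero => simp
    | succ n ih => exact ih.trans ((hstep _).trans_eq (by rw [pow_succ, div_div]))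
  have hanti : Antitone fun n : ℕ => {x | t / c ^ n < g x} := fun m n hmn x hx =>
    lt_of_le_of_lt (div_le_div_of_nonneg_left ht.le (pow_pos hc₀ _)
      (pow_le_pow_of_le_one hc₀.le hc₁.le hmn)) hx
  have hempty : ⋂ n : ℕ, {x | t / c ^ n < g x} = ∅ := by
    refine eq_empty_of_forall_notMem fun x hx => ?_
    have hmem (n : ℕ) : t / c ^ n < g x := mem_iInter.1 hx n
    have hgx : 0 < g x := ht.trans (by simpa using hmem 0)
    obtain ⟨n, hn⟩ := exists_pow_lt_of_lt_one (div_pos ht hgx) hc₁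
    have := hmem n
    rw [div_lt_iff₀ (pow_pos hc₀ n)] at this
    rw [lt_div_iff₀ hgx] at hn
    linarith [mul_comm (g x) (c ^ n)]
  have hlim := tendsto_measure_iInter_atTop
    (fun n => (measurableSet_lt measurable_const hg).nullMeasurableSet) hanti
    ⟨0, measure_ne_top P _⟩
  rw [hempty, measure_empty] at hlim
  exact le_antisymm (ge_of_tendsto' hlim (hiter t)) zero_le

lemma ae_nonpos_of_contracting (hP : IsSelfSimilar f P) (hf : ∀ i, Measurable (f i))
    (hg : Measurable g) (hc₀ : 0 < c) (hc₁ : c < 1) (hgf : ∀ i x, g (f i x) ≤ c * g x) :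
    ∀ᵐ x ∂P, g x ≤ 0 := by
  have hle (n : ℕ) : ∀ᵐ x ∂P, g x ≤ 1 / (n + 1) := by
    rw [ae_iff]
    simpa only [not_le] using
      hP.measure_lt_eq_zero_of_contracting hf hg hc₀ hc₁ hgf Nat.one_div_pos_of_nat
  filter_upwards [ae_all_iff.2 hle] with x hx
  exact ge_of_tendsto' tendsto_one_div_add_atTop_nhds_zero_nat hx

end Contracting

end IsSelfSimilar

section Cantor

variable {r : ℝ}

@[simp] lemma Smap_zero (r x : ℝ) : Smap r 0 x = r * x := rfl

@[simp] lemma Smap_one (r x : ℝ) : Smap r 1 x = r * x + (1 - r) := rfl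

lemma Smap_sub (r : ℝ) (i : Fin 2) (x y : ℝ) : Smap r i x - Smap r i y = r * (x - y) := by
  match i with
  | 0 | 1 => simp only [Smap_zero, Smap_one]; ring

lemma measurable_Smap (r : ℝ) (i : Fin 2) : Measurable (Smap r i) := by
  match i with
  | 0 => exact measurable_const_mul r
  | 1 => exact (measurable_const_mul r).add_const _

lemma mapsTo_Smap_Icc (hr₀ : 0 ≤ r) (hr₁ : r ≤ 1) (i : Fin 2) (δ : ℝ) :
    MapsTo (Smap r i) (Icc δ (1 - δ)) (Icc (r * δ) (1 - r * δ)) := by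
  rintro x ⟨hx₀, hx₁⟩
  match i with
  | 0 | 1 => simp only [Smap_zero, Smap_one, mem_Icc]; constructor <;> nlinarith

lemma mapsTo_Smap_unitInterval (hr₀ : 0 ≤ r) (hr₁ : r ≤ 1) (i : Fin 2) :
    MapsTo (Smap r i) (Icc 0 1) (Icc 0 1) := by
  simpa using mapsTo_Smap_Icc hr₀ hr₁ i 0

def midpoints (r : ℝ) (k : ℕ) : Set ℝ :=
  {y | ∃ σ : Fin k → Fin 2, y = Sword r (List.ofFn σ) (1/2)}

lemma midpoints_eq_range (r : ℝ) (k : ℕ) :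
    midpoints r k = range fun σ : Fin k → Fin 2 => Sword r (List.ofFn σ) (1/2) := by
  ext y; simp [midpoints, eq_comm]

lemma midpoints_finite (r : ℝ) (k : ℕ) : (midpoints r k).Finite := by
  rw [midpoints_eq_range]; exact finite_range _

lemma midpoints_nonempty (r : ℝ) (k : ℕ) : (midpoints r k).Nonempty := by
  rw [midpoints_eq_range]; exact range_nonempty _

lemma midpoints_zero (r : ℝ) : midpoints r 0 = {1/2} := by
  simp [midpoints_eq_range, Sword]

lemma minSqDist_midpoints_zero (r : ℝ) : minSqDist (midpoints r 0) = fun x => (x - 1/2) ^ 2 :=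
  funext fun x => by rw [midpoints_zero, minSqDist_singleton]

lemma midpoints_succ (r : ℝ) (k : ℕ) : midpoints r (k + 1) = ⋃ i, Smap r i '' midpoints r k := by
  ext y
  simp only [midpoints, mem_iUnion, mem_image, mem_ofPred_eq]
  constructor
  · rintro ⟨σ, rfl⟩
    exact ⟨σ 0, _, ⟨Fin.tail σ, rfl⟩, by rw [List.ofFn_succ]; rfl⟩
  · rintro ⟨i, _, ⟨τ, rfl⟩, rfl⟩
    exact ⟨Fin.cons i τ, by rw [List.ofFn_succ]; simp [Sword]⟩

lemma midpoints_subset_Icc (hr₀ : 0 ≤ r) (hr₁ : r ≤ 1) (k : ℕ) :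
    midpoints r k ⊆ Icc (r ^ k / 2) (1 - r ^ k / 2) := by
  induction k with
  | zero => rw [midpoints_zero, singleton_subset_iff]; norm_num
  | succ k ih =>
    rw [midpoints_succ, iUnion_subset_iff]
    intro i
    rw [image_subset_iff, pow_succ', mul_div_assoc]
    exact fun x hx => mapsTo_Smap_Icc hr₀ hr₁ i _ (ih hx)

lemma sq_le_sq_Smap_sub_Smap (hr₀ : 0 ≤ r) (hr₁ : r ≤ 1/2) {δ y b : ℝ} (hδ : 0 ≤ δ)
    (hy : y ∈ Icc 0 1) (hb : b ∈ Icc δ (1 - δ)) {i j : Fin 2} (hij : i ≠ j) :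
    (r * δ) ^ 2 ≤ (Smap r i y - Smap r j b) ^ 2 := by
  obtain ⟨hy₀, hy₁⟩ := hy
  obtain ⟨hb₀, hb₁⟩ := hb
  match i, j with
  | 0, 0 | 1, 1 => exact absurd rfl hij
  | 0, 1 =>
    rw [Smap_zero, Smap_one]
    nlinarith [mul_le_mul_of_nonneg_left hb₀ hr₀, mul_le_mul_of_nonneg_left hy₁ hr₀,
      mul_nonneg hr₀ hδ]
  | 1, 0 =>
    rw [Smap_one, Smap_zero]
    nlinarith [mul_le_mul_of_nonneg_left hb₁ hr₀, mul_le_mul_of_nonneg_left hy₀ hr₀,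
      mul_nonneg hr₀ hδ]

lemma minSqDist_iUnion_image_Smap (hr₀ : 0 ≤ r) (hr₁ : r ≤ 1/2) {δ : ℝ} (hδ : 0 ≤ δ)
    {B : Set ℝ} (hB : B.Nonempty) (hBδ : B ⊆ Icc δ (1 - δ)) {y : ℝ} (hy : y ∈ Icc 0 1)
    (hyB : minSqDist B y ≤ δ ^ 2) (i : Fin 2) :
    minSqDist (⋃ j, Smap r j '' B) (Smap r i y) = r ^ 2 * minSqDist B y := by
  have hown : minSqDist (Smap r i '' B) (Smap r i y) = r ^ 2 * minSqDist B y :=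
    minSqDist_image_of_affine (Smap_sub r i) B y
  rw [← hown]
  refine minSqDist_eq_of_subset (subset_iUnion_of_subset i subset_rfl) (hB.image _) ?_
  rintro _ ⟨_, ⟨j, rfl⟩, b, hb, rfl⟩
  rw [hown]
  obtain rfl | hij := eq_or_ne i j
  · rw [Smap_sub, mul_pow]
    exact mul_le_mul_of_nonneg_left (minSqDist_le hb) (sq_nonneg r)
  · calc r ^ 2 * minSqDist B y ≤ (r * δ) ^ 2 := by
          rw [mul_pow]; exact mul_le_mul_of_nonneg_left hyB (sq_nonneg r)
      _ ≤ (Smap r i y - Smap r j b) ^ 2 := sq_le_sq_Smap_sub_Smap hr₀ hr₁ hδ hy (hBδ hb) hij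

lemma minSqDist_midpoints_succ_Smap (hr₀ : 0 ≤ r) (hr₁ : r ≤ 1/2) {k : ℕ} {y : ℝ}
    (hy : y ∈ Icc 0 1) (hyB : minSqDist (midpoints r k) y ≤ (r ^ k / 2) ^ 2) (i : Fin 2) :
    minSqDist (midpoints r (k + 1)) (Smap r i y) = r ^ 2 * minSqDist (midpoints r k) y := by
  rw [midpoints_succ]
  exact minSqDist_iUnion_image_Smap hr₀ hr₁ (by positivity) (midpoints_nonempty r k)
    (midpoints_subset_Icc hr₀ (by linarith) k) hy hyB i

variable {P : Measure ℝ} [IsProbabilityMeasure P]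

lemma ae_mem_unitInterval (hr₀ : 0 < r) (hr₁ : r < 1) (hP : IsSelfSimilar (Smap r) P) :
    ∀ᵐ x ∂P, x ∈ Icc (0 : ℝ) 1 := by
  have hcontr (i : Fin 2) (x : ℝ) : |Smap r i x - 1/2| - 1/2 ≤ r * (|x - 1/2| - 1/2) := by
    match i with
    | 0 | 1 =>
      simp only [Smap_zero, Smap_one]
      rw [sub_le_iff_le_add, abs_le]
      constructor <;> nlinarith [neg_abs_le (x - 1/2), le_abs_self (x - 1/2)]
  filter_upwards [hP.ae_nonpos_of_contracting (measurable_Smap r)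
    (g := fun x => |x - 1/2| - 1/2) (by fun_prop) hr₀ hr₁ hcontr] with x hx
  have := abs_le.1 (sub_nonpos.1 hx)
  constructor <;> linarith

lemma ae_minSqDist_midpoints_le (hr₀ : 0 < r) (hr₁ : r ≤ 1/2) (hP : IsSelfSimilar (Smap r) P)
    (k : ℕ) : ∀ᵐ y ∂P, y ∈ Icc 0 1 ∩ {y | minSqDist (midpoints r k) y ≤ (r ^ k / 2) ^ 2} := by
  induction k with
  | zero =>
    filter_upwards [ae_mem_unitInterval hr₀ (by linarith) hP] with y hy
    refine ⟨hy, ?_⟩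
    simp only [mem_ofPred_eq, midpoints_zero, minSqDist_singleton]
    nlinarith [hy.1, hy.2]
  | succ k ih =>
    have hmeas : MeasurableSet
        (Icc 0 1 ∩ {y | minSqDist (midpoints r (k + 1)) y ≤ (r ^ (k + 1) / 2) ^ 2}) :=
      measurableSet_Icc.inter (measurableSet_le
        (midpoints_finite r _).countable.measurable_minSqDist measurable_const)
    refine hP.ae_mem_of_mapsTo (measurable_Smap r) ih hmeas fun i y ⟨hy, hyB⟩ =>
      ⟨mapsTo_Smap_unitInterval hr₀.le (by linarith) i hy, ?_⟩
    calc minSqDist (midpoints r (k + 1)) (Smap r i y) = r ^ 2 * minSqDist (midpoints r k) y :=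
          minSqDist_midpoints_succ_Smap hr₀.le hr₁ hy hyB i
      _ ≤ r ^ 2 * (r ^ k / 2) ^ 2 := by gcongr; exact hyB
      _ = (r ^ (k + 1) / 2) ^ 2 := by ring

lemma integrable_minSqDist_midpoints (hr₀ : 0 < r) (hr₁ : r ≤ 1/2)
    (hP : IsSelfSimilar (Smap r) P) (k : ℕ) : Integrable (minSqDist (midpoints r k)) P := by
  refine .of_bound (midpoints_finite r k).countable.measurable_minSqDist.aestronglyMeasurable
    ((r ^ k / 2) ^ 2) ?_
  filter_upwards [ae_minSqDist_midpoints_le hr₀ hr₁ hP k] with y hy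
  rw [Real.norm_of_nonneg (minSqDist_nonneg (midpoints_nonempty r k))]
  exact hy.2

lemma integral_minSqDist_midpoints_succ (hr₀ : 0 < r) (hr₁ : r ≤ 1/2)
    (hP : IsSelfSimilar (Smap r) P) (k : ℕ) :
    ∫ x, minSqDist (midpoints r (k + 1)) x ∂P = r ^ 2 * ∫ x, minSqDist (midpoints r k) x ∂P := by
  have hbranch (i : Fin 2) : ∫ x, minSqDist (midpoints r (k + 1)) (Smap r i x) ∂P
      = r ^ 2 * ∫ x, minSqDist (midpoints r k) x ∂P := by
    rw [← integral_const_mul]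
    refine integral_congr_ae ?_
    filter_upwards [ae_minSqDist_midpoints_le hr₀ hr₁ hP k] with y hy
    exact minSqDist_midpoints_succ_Smap hr₀.le hr₁ hy.1 hy.2 i
  rw [hP.integral_eq (measurable_Smap r) (integrable_minSqDist_midpoints hr₀ hr₁ hP _),
    hbranch, hbranch]
  ring

lemma integral_sq_sub_half (hr₀ : 0 < r) (hr₁ : r < 1) (hP : IsSelfSimilar (Smap r) P) :
    ∫ x, (x - 1/2) ^ 2 ∂P = (1 - r) / (4 * (1 + r)) := by
  have hint : Integrable (fun x : ℝ => (x - 1/2) ^ 2) P := by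
    refine .of_bound (by fun_prop) (1/4) ?_
    filter_upwards [ae_mem_unitInterval hr₀ hr₁ hP] with x ⟨hx₀, hx₁⟩
    rw [Real.norm_of_nonneg (sq_nonneg _)]
    nlinarith
  have hbranch (i : Fin 2) := hP.integrable_comp (measurable_Smap r) hint i
  have hsum (x : ℝ) : (2 : ℝ)⁻¹ * (Smap r 0 x - 1/2) ^ 2 + (2 : ℝ)⁻¹ * (Smap r 1 x - 1/2) ^ 2
      = r ^ 2 * (x - 1/2) ^ 2 + (1 - r) ^ 2 / 4 := by
    simp only [Smap_zero, Smap_one]; ring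
  have hfix : ∫ x, (x - 1/2) ^ 2 ∂P = r ^ 2 * ∫ x, (x - 1/2) ^ 2 ∂P + (1 - r) ^ 2 / 4 := by
    conv_lhs => rw [hP.integral_eq (measurable_Smap r) hint]
    rw [smul_eq_mul, smul_eq_mul, ← integral_const_mul, ← integral_const_mul,
      ← integral_add ((hbranch 0).const_mul _) ((hbranch 1).const_mul _)]
    simp_rw [hsum]
    rw [integral_add (hint.const_mul _) (integrable_const _), integral_const_mul, integral_const,
      probReal_univ, one_smul]
  rw [eq_div_iff (by positivity)]
  refine mul_left_cancel₀ (sub_ne_zero.2 (by linarith : (1 : ℝ) ≠ r)) ?_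
  linear_combination 4 * hfix

lemma integral_minSqDist_midpoints (hr₀ : 0 < r) (hr₁ : r ≤ 1/2)
    (hP : IsSelfSimilar (Smap r) P) (k : ℕ) :
    ∫ x, minSqDist (midpoints r k) x ∂P = r ^ (2 * k) * ((1 - r) / (4 * (1 + r))) := by
  induction k with
  | zero => rw [minSqDist_midpoints_zero, integral_sq_sub_half hr₀ (by linarith) hP, mul_zero, pow_zero,
      one_mul]
  | succ k ih => rw [integral_minSqDist_midpoints_succ hr₀ hr₁ hP, ih]; ring

end Cantor

theorem stmt14_general (r : ℝ) (hr1 : 0 < r) (hr2 : r < 1/2)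
    (P : Measure ℝ) [IsProbabilityMeasure P]
    (hP : P = (2 : ℝ≥0∞)⁻¹ • P.map (Smap r 0) + (2 : ℝ≥0∞)⁻¹ • P.map (Smap r 1))
    (k : ℕ) :
    ∫ x, sInf ((fun a => (x - a)^2) ''
        {y | ∃ σ : Fin k → Fin 2, y = Sword r (List.ofFn σ) (1/2)}) ∂P
      = r^(2*k) * ((1 - r) / (4 * (1 + r))) :=
  integral_minSqDist_midpoints hr1 hr2.le hP k

theorem stmt14 (r : ℝ) (hr1 : 0 < r) (hr2 : r < 1/2)
    (P : Measure ℝ) [IsProbabilityMeasure P]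
    (hP : P = (2 : ℝ≥0∞)⁻¹ • P.map (Smap r 0) + (2 : ℝ≥0∞)⁻¹ • P.map (Smap r 1))
    (k : ℕ) (hk : 1 ≤ k) :
    ∫ x, sInf ((fun a => (x - a)^2) ''
        {y | ∃ σ : Fin k → Fin 2, y = Sword r (List.ofFn σ) (1/2)}) ∂P
      = r^(2*k) * ((1 - r) / (4 * (1 + r))) :=
  stmt14_general r hr1 hr2 P hP k
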